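/- arXiv:2303.17203 — 2 statements merged into one kernel-verified Lean document; each statement's English description precedes it below -/
import Mathlib

section
/- For the d-dimensional Fourier basis pair (standard basis A, Fourier basis B), and any nonzero vector ψ ∈ C^d, n_A(ψ)·n_B(ψ) ≥ d (the Donoho–Stark support uncertainty relation). -/
open Complex Finset
open scoped Classical

noncomputable def dftOmega (d : ℕ) : ℂ := Complex.exp (2 * Real.pi * Complex.I / d)

/-- The j-th Fourier basis vector of `ℂ^d`, with i-th entry `ω^{ij}/√d`. -/
noncomputable def fourierVec (d : ℕ) (j : Fin d) : Fin d → ℂ :=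
  fun i => dftOmega d ^ ((i : ℕ) * (j : ℕ)) / Real.sqrt d

/-- The j-th Fourier coefficient `⟨f_j, ψ⟩ = (1/√d)∑_i ω^{−ij} ψ(i)`. -/
noncomputable def dftCoeff (d : ℕ) (ψ : Fin d → ℂ) (j : Fin d) : ℂ :=
  ∑ i, (starRingEnd ℂ) (fourierVec d j i) * ψ i

/-- Number of nonzero standard-basis coordinates of ψ. -/
noncomputable def nA (d : ℕ) (ψ : Fin d → ℂ) : ℕ :=
  (Finset.univ.filter fun i => ψ i ≠ 0).card

/-- Number of nonzero Fourier coefficients of ψ. -/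
noncomputable def nB (d : ℕ) (ψ : Fin d → ℂ) : ℕ :=
  (Finset.univ.filter fun j => dftCoeff d ψ j ≠ 0).card

/-- Kirkwood-Dirac distribution `Q_{ij} = ⟨e_i,ψ⟩⟨ψ,f_j⟩⟨f_j,e_i⟩` of ψ with
respect to the standard basis and the Fourier basis. -/
noncomputable def KD (d : ℕ) (ψ : Fin d → ℂ) (i j : Fin d) : ℂ :=
  ψ i * (∑ k, (starRingEnd ℂ) (ψ k) * fourierVec d j k) * (starRingEnd ℂ) (fourierVec d j i)

/-! Each coordinate of `ψ` is a combination of at most `n_B` Fourier coefficients with weights of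
modulus `1/√d`, so `‖ψ‖_∞ ≤ n_B ‖ψ̂‖_∞ / √d`; symmetrically `‖ψ̂‖_∞ ≤ n_A ‖ψ‖_∞ / √d`. Chaining the
two bounds and cancelling `‖ψ‖_∞ > 0` gives `d ≤ n_A n_B`. -/

open ComplexConjugate

lemma norm_sum_mul_le_card_support_mul {κ 𝕜 : Type*} [Fintype κ] [NormedRing 𝕜]
    {k : κ → 𝕜} {μ : ℝ} (hk : ∀ j, ‖k j‖ ≤ μ) (a : κ → 𝕜) :
    ‖∑ j, k j * a j‖ ≤ #{j | a j ≠ 0} * (μ * ‖a‖) :=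
  calc ‖∑ j, k j * a j‖ = ‖∑ j with a j ≠ 0, k j * a j‖ := by
        rw [sum_filter_of_ne fun j _ h => right_ne_zero_of_mul h]
    _ ≤ ∑ j with a j ≠ 0, ‖k j‖ * ‖a j‖ := norm_sum_le_of_le _ fun j _ => norm_mul_le _ _
    _ ≤ ∑ j with a j ≠ 0, μ * ‖a‖ := sum_le_sum fun j _ =>
        mul_le_mul (hk j) (norm_le_pi_norm a j) (norm_nonneg _) ((norm_nonneg _).trans (hk j))
    _ = #{j | a j ≠ 0} * (μ * ‖a‖) := by rw [sum_const, nsmul_eq_mul]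

theorem one_le_sq_mul_card_support_mul_card_support {ι κ 𝕜 : Type*} [Fintype ι] [Fintype κ]
    [NormedRing 𝕜] {ψ : ι → 𝕜} {c : κ → 𝕜} {U : ι → κ → 𝕜} {V : κ → ι → 𝕜} {μ : ℝ}
    (hU : ∀ i j, ‖U i j‖ ≤ μ) (hV : ∀ j i, ‖V j i‖ ≤ μ)
    (hψc : ∀ i, ψ i = ∑ j, U i j * c j) (hcψ : ∀ j, c j = ∑ i, V j i * ψ i) (hψ : ψ ≠ 0) :
    1 ≤ μ ^ 2 * (#{i | ψ i ≠ 0} * #{j | c j ≠ 0}) := by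
  obtain ⟨i, hi⟩ := Function.ne_iff.mp hψ
  obtain ⟨j, -, -⟩ := exists_ne_zero_of_sum_ne_zero (hψc i ▸ hi)
  have : Nonempty ι := ⟨i⟩
  have : Nonempty κ := ⟨j⟩
  have hμ : 0 ≤ μ := (norm_nonneg _).trans (hU i j)
  have hψ_le : ‖ψ‖ ≤ #{j | c j ≠ 0} * (μ * ‖c‖) := (pi_norm_le_iff_of_nonempty _).2 fun i =>
    hψc i ▸ norm_sum_mul_le_card_support_mul (hU i) c
  have hc_le : ‖c‖ ≤ #{i | ψ i ≠ 0} * (μ * ‖ψ‖) := (pi_norm_le_iff_of_nonempty _).2 fun j =>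
    hcψ j ▸ norm_sum_mul_le_card_support_mul (hV j) ψ
  have hψ_pos : 0 < ‖ψ‖ := norm_pos_iff.mpr hψ
  refine le_of_mul_le_mul_right ?_ hψ_pos
  calc 1 * ‖ψ‖ ≤ #{j | c j ≠ 0} * (μ * (#{i | ψ i ≠ 0} * (μ * ‖ψ‖))) := by
        rw [one_mul]
        exact hψ_le.trans <| mul_le_mul_of_nonneg_left (mul_le_mul_of_nonneg_left hc_le hμ)
          (Nat.cast_nonneg _)
    _ = μ ^ 2 * (#{i | ψ i ≠ 0} * #{j | c j ≠ 0}) * ‖ψ‖ := by ring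

lemma geom_sum_eq_ite_of_pow_eq_one {K : Type*} [Field K] {x : K} {n : ℕ} (hx : x ^ n = 1) :
    ∑ j ∈ range n, x ^ j = if x = 1 then (n : K) else 0 := by
  split_ifs with h
  · simp [h]
  · rw [geom_sum_eq h, hx, sub_self, zero_div]

lemma IsPrimitiveRoot.sum_pow_mul_conj_pow {ζ : ℂ} {d : ℕ} (hζ : IsPrimitiveRoot ζ d)
    (i k : Fin d) :
    ∑ j : Fin d, ζ ^ ((i : ℕ) * j) * conj (ζ ^ ((k : ℕ) * j)) = if i = k then (d : ℂ) else 0 := by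
  have hd : d ≠ 0 := i.pos.ne'
  set x := ζ ^ (i : ℕ) * (ζ ^ (k : ℕ))⁻¹
  have hterm (j : ℕ) : ζ ^ ((i : ℕ) * j) * conj (ζ ^ ((k : ℕ) * j)) = x ^ j := by
    have hnorm : ‖ζ ^ ((k : ℕ) * j)‖ = 1 := by rw [norm_pow, hζ.norm'_eq_one hd, one_pow]
    rw [← Complex.inv_eq_conj hnorm, mul_pow, inv_pow, pow_mul, pow_mul]
  have hpow (a : ℕ) : (ζ ^ a) ^ d = 1 := by
    rw [← pow_mul, mul_comm, pow_mul, hζ.pow_eq_one, one_pow]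
  have hxd : x ^ d = 1 := by rw [mul_pow, inv_pow, hpow, hpow, inv_one, mul_one]
  have hx : x = 1 ↔ i = k := by
    rw [mul_inv_eq_one₀ (pow_ne_zero _ (hζ.ne_zero hd)), Fin.ext_iff]
    exact ⟨fun h => hζ.pow_inj i.2 k.2 h, fun h => h ▸ rfl⟩
  simp only [hterm]
  rw [Fin.sum_univ_eq_sum_range (fun j => x ^ j), geom_sum_eq_ite_of_pow_eq_one hxd]
  simp only [hx]

lemma isPrimitiveRoot_dftOmega {d : ℕ} (hd : d ≠ 0) : IsPrimitiveRoot (dftOmega d) d :=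
  Complex.isPrimitiveRoot_exp d hd

lemma norm_fourierVec {d : ℕ} (hd : d ≠ 0) (j i : Fin d) :
    ‖fourierVec d j i‖ = (Real.sqrt d)⁻¹ := by
  rw [fourierVec, norm_div, norm_pow, (isPrimitiveRoot_dftOmega hd).norm'_eq_one hd, one_pow,
    Complex.norm_real, Real.norm_of_nonneg (Real.sqrt_nonneg _), one_div]

lemma sum_fourierVec_mul_conj {d : ℕ} (hd : d ≠ 0) (i k : Fin d) :
    ∑ j, fourierVec d j i * conj (fourierVec d j k) = if i = k then 1 else 0 := by
  have hsq : ((Real.sqrt d : ℂ)) * (Real.sqrt d : ℂ) = d := by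
    rw [← ofReal_mul, Real.mul_self_sqrt (Nat.cast_nonneg d), ofReal_natCast]
  simp only [fourierVec, map_div₀, conj_ofReal, div_mul_div_comm, ← sum_div, hsq,
    (isPrimitiveRoot_dftOmega hd).sum_pow_mul_conj_pow]
  split_ifs
  · exact div_self (Nat.cast_ne_zero.mpr hd)
  · exact zero_div _

lemma sum_fourierVec_mul_dftCoeff {d : ℕ} (hd : d ≠ 0) (ψ : Fin d → ℂ) (i : Fin d) :
    ∑ j, fourierVec d j i * dftCoeff d ψ j = ψ i := by
  simp only [dftCoeff, mul_sum, ← mul_assoc]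
  rw [sum_comm]
  simp only [← sum_mul, sum_fourierVec_mul_conj hd, ite_mul, one_mul, zero_mul, sum_ite_eq,
    mem_univ, if_true]

theorem donoho_stark_general (d : ℕ) (ψ : Fin d → ℂ) (hψ : ψ ≠ 0) :
    d ≤ nA d ψ * nB d ψ := by
  rcases eq_or_ne d 0 with rfl | hd
  · exact Nat.zero_le _
  have h := one_le_sq_mul_card_support_mul_card_support (c := dftCoeff d ψ)
    (U := fun i j => fourierVec d j i) (V := fun j i => conj (fourierVec d j i))
    (fun i j => (norm_fourierVec hd j i).le)
    (fun j i => by rw [Complex.norm_conj, norm_fourierVec hd])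
    (fun i => (sum_fourierVec_mul_dftCoeff hd ψ i).symm) (fun _ => rfl) hψ
  rw [inv_pow, Real.sq_sqrt (Nat.cast_nonneg d), inv_mul_eq_div,
    one_le_div (Nat.cast_pos.mpr (Nat.pos_of_ne_zero hd))] at h
  exact_mod_cast h

/-- Donoho–Stark support uncertainty: for any nonzero `ψ ∈ ℂ^d`,
`n_A(ψ)·n_B(ψ) ≥ d` for the standard/Fourier basis pair. -/
theorem donoho_stark (d : ℕ) (hd : 1 ≤ d) (ψ : Fin d → ℂ) (hψ : ψ ≠ 0) :
    d ≤ nA d ψ * nB d ψ :=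
  donoho_stark_general d ψ hψ
end

section
/- For every d ≥ 1 and every pair (n_A, n_B) of positive integers with n_A ≤ d, n_B ≤ d, and n_A + n_B ≥ d + 1, there exists a nonzero vector ψ ∈ C^d with exactly n_A nonzero standard-basis coordinates and exactly n_B nonzero Fourier coefficients. -/
open Complex Finset
open scoped Classical

/-!
Identify `ψ` with `P = ∑ ψ i Xⁱ`. With `η = ω⁻¹`, the Fourier coefficient `ψ̂ j` is `P(ηʲ)/√d`, so
`n_A` counts the nonzero coefficients of `P` and `n_B` the `j < d` with `P(ηʲ) ≠ 0`.
Put `m = d - n_B < n_A` and `P = q · S` with `q = ∏_{k<m} (X - ηᵏ)` and `deg S < n_A - m`. Then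
`P(ηʲ) = 0` for `j < m`, and `P` has no coefficient beyond `n_A - 1`. Each remaining condition —
`P(ηʲ) ≠ 0` for `m ≤ j < d`, `coeff n P ≠ 0` for `n < n_A` — asks a linear functional of `S` to be
nonzero, and none of these functionals vanishes identically: `q(ηʲ) ≠ 0`, and every coefficient of
`q` is nonzero. The latter holds because a functional equation relating `q(ηX)` to `q(X)` gives
`c_{n+1} ηᵐ (1 - ηⁿ⁺¹) = c_n η (ηᵐ - ηⁿ)` for the coefficients `c_n` of `q`; as `ηᵐ ≠ ηⁿ` for
`n < m < d`, nonvanishing passes from `c_0 = ∏ (-ηᵏ)` up to `c_m`.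
A generic `S` then meets all conditions, as a vector space over an infinite field is not a finite
union of proper hyperplanes.
-/

open Polynomial

theorem Module.Dual.exists_forall_apply_ne_zero {K E ι : Type*} [Field K] [Infinite K]
    [AddCommGroup E] [Module K E] (s : Finset ι) (L : ι → Module.Dual K E)
    (hL : ∀ i ∈ s, L i ≠ 0) : ∃ v, ∀ i ∈ s, L i v ≠ 0 := by
  by_contra! hcover
  obtain ⟨⟨i, hi⟩, htop⟩ := Subspace.exists_eq_top_of_iUnion_eq_univ
    (p := fun i : s => LinearMap.ker (L i)) <| Set.eq_univ_of_forall fun v => by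
      obtain ⟨i, hi, hv⟩ := hcover v
      exact Set.mem_iUnion.2 ⟨⟨i, hi⟩, hv⟩
  exact hL i hi (LinearMap.ker_eq_top.1 htop)

section GeomRoots

variable {R : Type*} [CommRing R]

noncomputable def geomRootsPoly (η : R) (m : ℕ) : R[X] :=
  ∏ k ∈ range m, (X - C (η ^ k))

theorem geomRootsPoly_monic (η : R) (m : ℕ) : (geomRootsPoly η m).Monic :=
  monic_prod_of_monic _ _ fun _ _ => monic_X_sub_C _

theorem natDegree_geomRootsPoly [Nontrivial R] (η : R) (m : ℕ) :
    (geomRootsPoly η m).natDegree = m := by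
  rw [geomRootsPoly, natDegree_prod_of_monic _ _ fun k _ => monic_X_sub_C (η ^ k)]
  simp only [natDegree_X_sub_C, sum_const, card_range, smul_eq_mul, mul_one]

theorem eval_geomRootsPoly_pow_eq_zero {η : R} {m j : ℕ} (hj : j < m) :
    (geomRootsPoly η m).eval (η ^ j) = 0 := by
  rw [geomRootsPoly, eval_prod]
  exact prod_eq_zero (mem_range.2 hj) (by simp)

theorem geomRootsPoly_mul_comp_C_mul_X (η : R) (m : ℕ) :
    (C η * X - C (η ^ m)) * (geomRootsPoly η m).comp (C η * X) =
      C (η ^ m) * (C η * X - 1) * geomRootsPoly η m := by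
  have hfactor : ∀ k, C η * X - C (η ^ (k + 1)) = C η * (X - C (η ^ k)) := fun k => by
    rw [pow_succ', C_mul, mul_sub]
  simp only [geomRootsPoly, Polynomial.prod_comp, sub_comp, X_comp, C_comp]
  rw [mul_comm, ← prod_range_succ (fun k => C η * X - C (η ^ k)), prod_range_succ', pow_zero,
    C_1, prod_congr rfl fun k _ => hfactor k, prod_mul_distrib, prod_const, card_range, C_pow]
  ring

theorem coeff_succ_geomRootsPoly (η : R) (m n : ℕ) :
    (geomRootsPoly η m).coeff (n + 1) * η ^ m * (1 - η ^ (n + 1)) =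
      (geomRootsPoly η m).coeff n * η * (η ^ m - η ^ n) := by
  have h := congrArg (coeff · (n + 1)) (geomRootsPoly_mul_comp_C_mul_X η m)
  simp only [sub_mul, mul_sub, coeff_sub, mul_assoc, coeff_C_mul, coeff_X_mul, comp_C_mul_X_coeff,
    one_mul] at h
  linear_combination h

end GeomRoots

section GeomRootsDomain

variable {R : Type*} [CommRing R] [IsDomain R] {η : R} {d : ℕ}

theorem IsPrimitiveRoot.eval_geomRootsPoly_pow_ne_zero (hη : IsPrimitiveRoot η d) {m j : ℕ}
    (hmj : m ≤ j) (hjd : j < d) : (geomRootsPoly η m).eval (η ^ j) ≠ 0 := by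
  rw [geomRootsPoly, eval_prod, prod_ne_zero_iff]
  intro k hk heq
  rw [eval_sub, eval_X, eval_C, sub_eq_zero] at heq
  have hkm := mem_range.1 hk
  exact absurd (hη.pow_inj hjd (by omega) heq) (by omega)

theorem IsPrimitiveRoot.coeff_geomRootsPoly_ne_zero (hη : IsPrimitiveRoot η d) {m : ℕ}
    (hmd : m < d) {n : ℕ} (hnm : n ≤ m) : (geomRootsPoly η m).coeff n ≠ 0 := by
  have hη0 : η ≠ 0 := hη.ne_zero (by omega)
  induction n with
  | zero =>
    rw [coeff_zero_eq_eval_zero, geomRootsPoly, eval_prod]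
    exact prod_ne_zero_iff.2 fun k _ => by simp [hη0]
  | succ n ih =>
    intro h0
    have hrec := coeff_succ_geomRootsPoly η m n
    rw [h0, zero_mul, zero_mul, eq_comm] at hrec
    have hne : η ^ m - η ^ n ≠ 0 :=
      sub_ne_zero.2 fun h => absurd (hη.pow_inj hmd (by omega) h) (by omega)
    exact mul_ne_zero (mul_ne_zero (ih (by omega)) hη0) hne hrec

end GeomRootsDomain

theorem IsPrimitiveRoot.exists_poly_coeff_ne_zero_iff_eval_pow_ne_zero_iff {K : Type*} [Field K]
    [Infinite K] {η : K} {d a m : ℕ} (hη : IsPrimitiveRoot η d) (hma : m < a) (had : a ≤ d) :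
    ∃ P : K[X], (∀ n, P.coeff n ≠ 0 ↔ n < a) ∧ ∀ j < d, (P.eval (η ^ j) ≠ 0 ↔ m ≤ j) := by
  set q := geomRootsPoly η m
  let mulQ : K[X]_(a - m) →ₗ[K] K[X] := LinearMap.mulLeft K q ∘ₗ (degreeLT K (a - m)).subtype
  let L : ℕ ⊕ ℕ → Module.Dual K K[X]_(a - m) :=
    Sum.elim (fun n => lcoeff K n ∘ₗ mulQ) (fun j => leval (η ^ j) ∘ₗ mulQ)
  have hXpow : ∀ l < a - m, X ^ l ∈ K[X]_(a - m) := fun l hl => by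
    rw [mem_degreeLT, degree_X_pow]
    exact_mod_cast hl
  have hL : ∀ i ∈ (range a).disjSum (Ico m d), L i ≠ 0 := by
    rintro (n | j) hi <;> simp only [inl_mem_disjSum, inr_mem_disjSum, mem_range, mem_Ico] at hi
    -- `q * X ^ (n - min n m)` has the nonzero coefficient `q.coeff (min n m)` in degree `n`
    · refine DFunLike.ne_iff.2 ⟨⟨X ^ (n - min n m), hXpow _ (by omega)⟩, ?_⟩
      simpa [L, mulQ, coeff_mul_X_pow', Nat.sub_sub_self (min_le_left n m)] using
        hη.coeff_geomRootsPoly_ne_zero (by omega) (min_le_right n m)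
    · refine DFunLike.ne_iff.2 ⟨⟨1, by simpa using hXpow 0 (by omega)⟩, ?_⟩
      simpa [L, mulQ] using hη.eval_geomRootsPoly_pow_ne_zero hi.1 hi.2
  obtain ⟨S, hS⟩ := Module.Dual.exists_forall_apply_ne_zero _ L hL
  have hdeg : (q * S).degree < a := by
    rw [degree_mul, degree_eq_natDegree (geomRootsPoly_monic η m).ne_zero,
      natDegree_geomRootsPoly]
    calc (m : WithBot ℕ) + (S : K[X]).degree < m + (a - m : ℕ) :=
          WithBot.add_lt_add_left WithBot.coe_ne_bot (mem_degreeLT.1 S.2)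
      _ = a := by norm_cast; omega
  refine ⟨q * S, fun n => ⟨fun h => ?_, fun hn => hS (.inl n) (by simpa)⟩,
    fun j hj => ⟨fun h => ?_, fun hmj => hS (.inr j) (by simp [hmj, hj])⟩⟩
  · by_contra! han
    exact h (coeff_eq_zero_of_degree_lt (hdeg.trans_le (by exact_mod_cast han)))
  · by_contra! hjm
    exact h (by rw [eval_mul, eval_geomRootsPoly_pow_eq_zero hjm, zero_mul])

theorem starRingEnd_dftOmega (d : ℕ) : starRingEnd ℂ (dftOmega d) = (dftOmega d)⁻¹ := by
  rw [dftOmega, ← exp_conj, ← exp_neg]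
  congr 1
  simp [map_div₀, neg_div, map_ofNat]

theorem dftCoeff_coeff {d : ℕ} (P : ℂ[X]) (hP : P.natDegree < d) (j : Fin d) :
    dftCoeff d (fun i => P.coeff i) j = P.eval ((dftOmega d)⁻¹ ^ (j : ℕ)) / Real.sqrt d := by
  rw [dftCoeff, eval_eq_sum_range' hP, ← Fin.sum_univ_eq_sum_range, sum_div]
  refine sum_congr rfl fun i _ => ?_
  simp only [fourierVec, map_div₀, map_pow, starRingEnd_dftOmega, conj_ofReal]
  ring

theorem no_holes_above_line_general (d nA' nB' : ℕ) (h2 : nA' ≤ d) (h3 : 1 ≤ nB') (h4 : nB' ≤ d)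
    (h : d + 1 ≤ nA' + nB') :
    ∃ ψ : Fin d → ℂ, ψ ≠ 0 ∧ nA d ψ = nA' ∧ nB d ψ = nB' := by
  have hω : IsPrimitiveRoot (dftOmega d)⁻¹ d := (isPrimitiveRoot_exp d (by omega)).inv
  obtain ⟨P, hcoeff, heval⟩ :=
    hω.exists_poly_coeff_ne_zero_iff_eval_pow_ne_zero_iff (m := d - nB') (by omega) h2
  have hP0 : P ≠ 0 := fun h0 => (hcoeff 0).2 (by omega) (by simp [h0])
  have hdeg : P.natDegree < d := ((hcoeff _).1 (leadingCoeff_ne_zero.2 hP0)).trans_le h2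
  have hA : nA d (fun i => P.coeff i) = nA' := by
    simp only [nA, hcoeff, Fin.card_filter_val_lt]
    omega
  have hB : nB d (fun i => P.coeff i) = nB' := by
    have hcompl := card_filter_add_card_filter_not (s := univ) fun j : Fin d => (j : ℕ) < d - nB'
    have hsqrt : ((Real.sqrt d : ℝ) : ℂ) ≠ 0 := by simp; omega
    rw [nB, filter_congr fun j _ => by
      rw [dftCoeff_coeff P hdeg, div_ne_zero_iff, heval j j.2, and_iff_left hsqrt]]
    simp only [Fin.card_filter_val_lt, not_lt, card_univ, Fintype.card_fin] at hcompl ⊢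
    omega
  refine ⟨fun i => P.coeff i, fun h0 => ?_, hA, hB⟩
  rw [h0] at hA
  simp [nA] at hA
  omega

/-- Corollary 1: every point `(n_A, n_B)` with `n_A + n_B ≥ d + 1` lies in the
uncertainty diagram of the DFT. -/
theorem no_holes_above_line (d nA' nB' : ℕ) (hd : 1 ≤ d)
    (h1 : 1 ≤ nA') (h2 : nA' ≤ d) (h3 : 1 ≤ nB') (h4 : nB' ≤ d)
    (h : d + 1 ≤ nA' + nB') :
    ∃ ψ : Fin d → ℂ, ψ ≠ 0 ∧ nA d ψ = nA' ∧ nB d ψ = nB' :=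
  no_holes_above_line_general d nA' nB' h2 h3 h4 h
end
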